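/- arXiv:1004.5249 — 2 statements merged into one kernel-verified Lean document; each statement's English description precedes it below -/
import Mathlib

section
/- A morphism p : X → Y between fibrant objects in a Quillen model category is a weak equivalence if and only if it has the right homotopy extension lifting property with respect to all cofibrations. -/
open CategoryTheory CategoryTheory.Limits

universe v u

/-- A Quillen (closed) model structure on a category `C`. -/
structure QuillenModelStructure (C : Type u) [Category.{v} C]
    [HasFiniteLimits C] [HasFiniteColimits C] where
  weq : MorphismProperty C
  fib : MorphismProperty C
  cof : MorphismProperty C
  weq_of_iso : ∀ {X Y : C} (f : X ⟶ Y), IsIso f → weq f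
  fib_of_iso : ∀ {X Y : C} (f : X ⟶ Y), IsIso f → fib f
  cof_of_iso : ∀ {X Y : C} (f : X ⟶ Y), IsIso f → cof f
  weq_comp : ∀ {X Y Z : C} (f : X ⟶ Y) (g : Y ⟶ Z), weq f → weq g → weq (f ≫ g)
  weq_of_comp_left : ∀ {X Y Z : C} (f : X ⟶ Y) (g : Y ⟶ Z), weq g → weq (f ≫ g) → weq f
  weq_of_comp_right : ∀ {X Y Z : C} (f : X ⟶ Y) (g : Y ⟶ Z), weq f → weq (f ≫ g) → weq g
  weq_retract : ∀ {X Y X' Y' : C} (f : X ⟶ Y) (f' : X' ⟶ Y')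
    (iX : X' ⟶ X) (rX : X ⟶ X') (iY : Y' ⟶ Y) (rY : Y ⟶ Y'),
    iX ≫ rX = 𝟙 X' → iY ≫ rY = 𝟙 Y' → iX ≫ f = f' ≫ iY → f ≫ rY = rX ≫ f' →
    weq f → weq f'
  fib_retract : ∀ {X Y X' Y' : C} (f : X ⟶ Y) (f' : X' ⟶ Y')
    (iX : X' ⟶ X) (rX : X ⟶ X') (iY : Y' ⟶ Y) (rY : Y ⟶ Y'),
    iX ≫ rX = 𝟙 X' → iY ≫ rY = 𝟙 Y' → iX ≫ f = f' ≫ iY → f ≫ rY = rX ≫ f' →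
    fib f → fib f'
  cof_retract : ∀ {X Y X' Y' : C} (f : X ⟶ Y) (f' : X' ⟶ Y')
    (iX : X' ⟶ X) (rX : X ⟶ X') (iY : Y' ⟶ Y) (rY : Y ⟶ Y'),
    iX ≫ rX = 𝟙 X' → iY ≫ rY = 𝟙 Y' → iX ≫ f = f' ≫ iY → f ≫ rY = rX ≫ f' →
    cof f → cof f'
  lift_cof_trivFib : ∀ {A B X Y : C} (i : A ⟶ B) (p : X ⟶ Y),
    cof i → fib p → weq p → HasLiftingProperty i p
  lift_trivCof_fib : ∀ {A B X Y : C} (i : A ⟶ B) (p : X ⟶ Y),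
    cof i → weq i → fib p → HasLiftingProperty i p
  factor_cof_trivFib : ∀ {X Y : C} (f : X ⟶ Y), ∃ (Z : C) (i : X ⟶ Z) (q : Z ⟶ Y),
    cof i ∧ fib q ∧ weq q ∧ i ≫ q = f
  factor_trivCof_fib : ∀ {X Y : C} (f : X ⟶ Y), ∃ (Z : C) (i : X ⟶ Z) (q : Z ⟶ Y),
    cof i ∧ weq i ∧ fib q ∧ i ≫ q = f

variable {C : Type u} [Category.{v} C] [HasFiniteLimits C] [HasFiniteColimits C]

/-- An object is fibrant if the map to the terminal object is a fibration. -/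
def QuillenModelStructure.Fibrant (M : QuillenModelStructure C) (X : C) : Prop :=
  M.fib (terminal.from X)

/-- An object is cofibrant if the map from the initial object is a cofibration. -/
def QuillenModelStructure.Cofibrant (M : QuillenModelStructure C) (X : C) : Prop :=
  M.cof (initial.to X)

/-!
For a path object `π : Y^I ⟶ Y ⨯ Y`, a right HELP problem for `p` against `i` is exactly a lifting
problem of `i` against the endpoint projection `X ×_Y Y^I ⟶ Y` of the mapping path space. When `X`
is fibrant this projection is a fibration, and `p` factors as the constant-path map
`X ⟶ X ×_Y Y^I`, a section of the trivial fibration `X ×_Y Y^I ⟶ X`, followed by the projection.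
Hence `p` is a weak equivalence iff the projection is a trivial fibration, i.e. iff it lifts
against all cofibrations.
-/

namespace QuillenModelStructure

variable (M : QuillenModelStructure C)

lemma weq_of_retract {X Y Z W : C} {f : X ⟶ Y} {g : Z ⟶ W} (h : RetractArrow f g)
    (hg : M.weq g) : M.weq f :=
  M.weq_retract g f h.i.left h.r.left h.i.right h.r.right h.retract_left h.retract_right
    h.i_w h.r_w.symm hg

lemma fib_of_retract {X Y Z W : C} {f : X ⟶ Y} {g : Z ⟶ W} (h : RetractArrow f g)
    (hg : M.fib g) : M.fib f :=
  M.fib_retract g f h.i.left h.r.left h.i.right h.r.right h.retract_left h.retract_right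
    h.i_w h.r_w.symm hg

lemma weq_of_rlp_cof {X Y : C} {f : X ⟶ Y} (hf : M.cof.rlp f) : M.weq f := by
  obtain ⟨Z, i, q, hi, -, hq, rfl⟩ := M.factor_cof_trivFib f
  have := hf i hi
  exact M.weq_of_retract (RetractArrow.ofRightLiftingProperty rfl) hq

lemma fib_of_rlp_trivCof {X Y : C} {f : X ⟶ Y} (hf : (M.cof ⊓ M.weq).rlp f) : M.fib f := by
  obtain ⟨Z, i, q, hi, hiw, hq, rfl⟩ := M.factor_trivCof_fib f
  have := hf i ⟨hi, hiw⟩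
  exact M.fib_of_retract (RetractArrow.ofRightLiftingProperty rfl) hq

lemma fib_comp {X Y Z : C} {f : X ⟶ Y} {g : Y ⟶ Z} (hf : M.fib f) (hg : M.fib g) :
    M.fib (f ≫ g) :=
  M.fib_of_rlp_trivCof fun _ _ i ⟨hi, hiw⟩ =>
    have := M.lift_trivCof_fib i f hi hiw hf
    have := M.lift_trivCof_fib i g hi hiw hg
    inferInstance

lemma fib_of_isPullback {X Y Z W : C} {s : X ⟶ Z} {f : X ⟶ Y} {g : Z ⟶ W} {t : Y ⟶ W}
    (h : IsPullback s f g t) (hg : M.fib g) : M.fib f :=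
  M.fib_of_rlp_trivCof fun _ _ i ⟨hi, hiw⟩ =>
    have := M.lift_trivCof_fib i g hi hiw hg
    h.hasLiftingProperty i

lemma weq_of_isPullback {X Y Z W : C} {s : X ⟶ Z} {f : X ⟶ Y} {g : Z ⟶ W} {t : Y ⟶ W}
    (h : IsPullback s f g t) (hg : M.fib g) (hg' : M.weq g) : M.weq f :=
  M.weq_of_rlp_cof fun _ _ i hi =>
    have := M.lift_cof_trivFib i g hi hg hg'
    h.hasLiftingProperty i

lemma fib_prod_fst {Y Z : C} (hZ : M.Fibrant Z) : M.fib (prod.fst : Y ⨯ Z ⟶ Y) :=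
  M.fib_of_isPullback (IsPullback.of_hasBinaryProduct' Y Z).flip hZ

lemma exists_extension_of_fibrant {A B Z : C} {i : A ⟶ B} (hi : M.cof i) (hiw : M.weq i)
    (hZ : M.Fibrant Z) (u : A ⟶ Z) : ∃ v : B ⟶ Z, i ≫ v = u := by
  have := M.lift_trivCof_fib i _ hi hiw hZ
  have sq : CommSq u i (terminal.from Z) (terminal.from B) := ⟨Subsingleton.elim _ _⟩
  exact ⟨sq.lift, sq.fac_left⟩

end QuillenModelStructure

section MappingPathSpace

variable {C : Type*} [Category* C] [HasPullbacks C] [HasBinaryProducts C]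
  {X Y P : C} (p : X ⟶ Y) (π : P ⟶ Y ⨯ Y)

def HasRightHELP {A B : C} (i : A ⟶ B) : Prop :=
  ∀ (fA : A ⟶ X) (g : B ⟶ Y) (hA : A ⟶ P),
    hA ≫ π = prod.lift (fA ≫ p) (i ≫ g) →
    ∃ (f : B ⟶ X) (h : B ⟶ P), i ≫ f = fA ∧ i ≫ h = hA ∧ h ≫ π = prod.lift (f ≫ p) g

noncomputable abbrev mappingPathSpace : C := pullback p (π ≫ prod.fst)

namespace mappingPathSpace

noncomputable def proj : mappingPathSpace p π ⟶ Y := pullback.snd _ _ ≫ π ≫ prod.snd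

lemma snd_π :
    pullback.snd p (π ≫ prod.fst) ≫ π = prod.lift (pullback.fst _ _ ≫ p) (proj p π) := by
  ext
  · simp [pullback.condition, prod.lift_fst]
  · simp [proj, prod.lift_snd]

variable {p π} {T : C} (f : T ⟶ X) (h : T ⟶ P) {g : T ⟶ Y}

noncomputable def lift (w : h ≫ π = prod.lift (f ≫ p) g) : T ⟶ mappingPathSpace p π :=
  pullback.lift f h (by simp [reassoc_of% w, prod.lift_fst])

variable (w : h ≫ π = prod.lift (f ≫ p) g)

@[simp]
lemma lift_fst : lift f h w ≫ pullback.fst _ _ = f := pullback.lift_fst _ _ _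

@[simp]
lemma lift_snd : lift f h w ≫ pullback.snd _ _ = h := pullback.lift_snd _ _ _

@[simp]
lemma lift_proj : lift f h w ≫ proj p π = g := by
  rw [proj, ← Category.assoc, lift_snd, reassoc_of% w, prod.lift_snd]

end mappingPathSpace

open mappingPathSpace in
lemma hasLiftingProperty_mappingPathSpace_proj_iff {A B : C} (i : A ⟶ B) :
    HasLiftingProperty i (proj p π) ↔ HasRightHELP p π i := by
  constructor
  · intro _ fA g hA w
    have sq : CommSq (lift fA hA w) i (proj p π) g := ⟨by simp⟩
    refine ⟨sq.lift ≫ pullback.fst _ _, sq.lift ≫ pullback.snd _ _, ?_, ?_, ?_⟩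
    · simp [reassoc_of% sq.fac_left]
    · simp [reassoc_of% sq.fac_left]
    · simp [snd_π]
  · refine fun H => ⟨fun {u v} sq => ?_⟩
    obtain ⟨f, h, hf, hh, w⟩ := H (u ≫ pullback.fst _ _) v (u ≫ pullback.snd _ _)
      (by simp [snd_π, sq.w])
    exact ⟨⟨{ l := lift f h w, fac_left := pullback.hom_ext (by simp [hf]) (by simp [hh]) }⟩⟩

end MappingPathSpace

namespace QuillenModelStructure

variable (M : QuillenModelStructure C) {X Y P : C} (p : X ⟶ Y) {π : P ⟶ Y ⨯ Y}

lemma hasRightHELP_of_trivCof (hX : M.Fibrant X) (hπ : M.fib π) {A B : C} {i : A ⟶ B}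
    (hi : M.cof i) (hiw : M.weq i) : HasRightHELP p π i := by
  intro fA g hA w
  obtain ⟨f, hf⟩ := M.exists_extension_of_fibrant hi hiw hX fA
  have := M.lift_trivCof_fib i π hi hiw hπ
  have sq : CommSq hA i π (prod.lift (f ≫ p) g) :=
    ⟨by rw [w]; ext <;> simp [reassoc_of% hf, prod.lift_fst, prod.lift_snd]⟩
  exact ⟨f, sq.lift, hf, sq.fac_left, sq.fac_right⟩

lemma fib_mappingPathSpace_proj (hX : M.Fibrant X) (hπ : M.fib π) :
    M.fib (mappingPathSpace.proj p π) :=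
  M.fib_of_rlp_trivCof fun _ _ i ⟨hi, hiw⟩ =>
    (hasLiftingProperty_mappingPathSpace_proj_iff p π i).2
      (M.hasRightHELP_of_trivCof p hX hπ hi hiw)

open mappingPathSpace in
lemma weq_iff_weq_mappingPathSpace_proj (hY : M.Fibrant Y) {j : Y ⟶ P} (hj : M.weq j)
    (hπ : M.fib π) (hjπ : j ≫ π = prod.lift (𝟙 Y) (𝟙 Y)) :
    M.weq p ↔ M.weq (proj p π) := by
  have hjπ₀ : j ≫ π ≫ prod.fst = 𝟙 Y := by simp [reassoc_of% hjπ, prod.lift_fst]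
  have hπ₀ : M.weq (π ≫ prod.fst) :=
    M.weq_of_comp_right j _ hj (hjπ₀ ▸ M.weq_of_iso _ inferInstance)
  have hfst : M.weq (pullback.fst p (π ≫ prod.fst)) :=
    M.weq_of_isPullback (IsPullback.of_hasPullback _ _).flip
      (M.fib_comp hπ (M.fib_prod_fst hY)) hπ₀
  have w : (p ≫ j) ≫ π = prod.lift (𝟙 X ≫ p) p := by simp [hjπ]
  have hconst : M.weq (lift (𝟙 X) (p ≫ j) w) :=
    M.weq_of_comp_left _ _ hfst (by rw [lift_fst]; exact M.weq_of_iso _ inferInstance)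
  constructor
  · intro hp
    exact M.weq_of_comp_right _ _ hconst (by rwa [lift_proj])
  · intro hproj
    simpa using M.weq_comp _ _ hconst hproj

end QuillenModelStructure

/-- A map between fibrant objects is a weak equivalence iff it has the right homotopy
extension lifting property with respect to all cofibrations. -/
theorem weq_iff_right_HELP (M : QuillenModelStructure C) {X Y : C}
    (p : X ⟶ Y) (hX : M.Fibrant X) (hY : M.Fibrant Y) :
    M.weq p ↔
      ∀ (YI : C) (j : Y ⟶ YI) (π : YI ⟶ Y ⨯ Y),
        M.weq j → M.fib π → j ≫ π = prod.lift (𝟙 Y) (𝟙 Y) →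
        ∀ {A B : C} (i : A ⟶ B), M.cof i →
          ∀ (fA : A ⟶ X) (g : B ⟶ Y) (hA : A ⟶ YI),
            hA ≫ π = prod.lift (fA ≫ p) (i ≫ g) →
            ∃ (f : B ⟶ X) (h : B ⟶ YI),
              i ≫ f = fA ∧ i ≫ h = hA ∧ h ≫ π = prod.lift (f ≫ p) g := by
  constructor
  · intro hp YI j π hj hπ hjπ A B i hi
    have := M.lift_cof_trivFib i _ hi (M.fib_mappingPathSpace_proj p hX hπ)
      ((M.weq_iff_weq_mappingPathSpace_proj p hY hj hπ hjπ).1 hp)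
    exact (hasLiftingProperty_mappingPathSpace_proj_iff p π i).1 this
  · intro H
    obtain ⟨YI, j, π, -, hj, hπ, hjπ⟩ := M.factor_trivCof_fib (prod.lift (𝟙 Y) (𝟙 Y))
    refine (M.weq_iff_weq_mappingPathSpace_proj p hY hj hπ hjπ).2 (M.weq_of_rlp_cof ?_)
    exact fun _ _ i hi => (hasLiftingProperty_mappingPathSpace_proj_iff p π i).2
      (H YI j π hj hπ hjπ i hi)
end

section
/- A morphism i : A → B between cofibrant objects in a Quillen model category is a weak equivalence if and only if it has the left homotopy extension lifting property with respect to all fibrations: for every fibration p : X → Y, morphisms f : A → X, g_Y : B → Y, cylinder object Z_A for A, and left homotopy h_Y : Z_A → Y from g_Y ∘ i to p ∘ f, there exist g : B → X and a left homotopy h : Z_A → X from g ∘ i to f with p ∘ g = g_Y and p ∘ h = h_Y. -/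
open CategoryTheory CategoryTheory.Limits

universe v u

variable {C : Type u} [Category.{v} C] [HasFiniteLimits C] [HasFiniteColimits C]

/-!
A left HELP problem for `i` is precisely a lifting problem for `p` against the far end
`A ⟶ B ⊔_A Z` of the mapping cylinder of `i` built on the given cylinder `Z`. For cofibrant `A`
and `B` this end is a cofibration, and it is a weak equivalence when `i` is, because the mapping
cylinder retracts onto `B` and its inclusion of `B` is a pushout of the trivial cofibration
`coprod.inl ≫ ins`. Conversely, solving the problem for a factorization `i = c ≫ q` into a trivial
cofibration and a fibration, with `f = c` and `gY = 𝟙`, yields a section `g` of `q` such that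
`q ≫ g` is a weak equivalence; then `q` is a retract of `q ≫ g`.
-/

section MappingCylinder

variable {C : Type u} [Category.{v} C] [HasInitial C] {A B Z X Y : C} [HasBinaryCoproduct A A]

lemma hasLiftingProperty_mappingCylinder_inr (i : A ⟶ B) (ins : A ⨿ A ⟶ Z)
    [HasPushout i (coprod.inl ≫ ins)] (q : X ⟶ Y)
    [HasLiftingProperty (initial.to B) q] [HasLiftingProperty ins q] :
    HasLiftingProperty (coprod.inr ≫ ins ≫ pushout.inr i (coprod.inl ≫ ins)) q where
  sq_hasLift {u v} sq := by
    have sqB : CommSq (initial.to X) (initial.to B) q (pushout.inl _ _ ≫ v) :=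
      ⟨initial.hom_ext _ _⟩
    have sqZ : CommSq (coprod.desc (i ≫ sqB.lift) u) ins q (pushout.inr _ _ ≫ v) := ⟨by
      apply coprod.hom_ext
      · rw [coprod.inl_desc_assoc, Category.assoc, sqB.fac_right, pushout.condition_assoc,
          Category.assoc]
      · rw [coprod.inr_desc_assoc, sq.w, Category.assoc, Category.assoc]⟩
    have hinl : coprod.inl ≫ ins ≫ sqZ.lift = i ≫ sqB.lift := by
      rw [sqZ.fac_left, coprod.inl_desc]
    have hinr : coprod.inr ≫ ins ≫ sqZ.lift = u := by
      rw [sqZ.fac_left, coprod.inr_desc]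
    exact ⟨⟨{ l := pushout.desc sqB.lift sqZ.lift (by rw [Category.assoc, hinl])
              fac_left := by rw [Category.assoc, Category.assoc, pushout.inr_desc, hinr]
              fac_right := by
                apply pushout.hom_ext
                · rw [pushout.inl_desc_assoc, sqB.fac_right]
                · rw [pushout.inr_desc_assoc, sqZ.fac_right] }⟩⟩

end MappingCylinder

namespace QuillenModelStructure

variable {C : Type u} [Category.{v} C] [HasFiniteLimits C] [HasFiniteColimits C]
  (M : QuillenModelStructure C)

lemma weq_id (X : C) : M.weq (𝟙 X) := M.weq_of_iso _ inferInstance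

lemma cof_of_hasLiftingProperty {A B : C} (f : A ⟶ B)
    (H : ∀ {X Y : C} (p : X ⟶ Y), M.fib p → M.weq p → HasLiftingProperty f p) :
    M.cof f := by
  obtain ⟨Z, c, q, hc, hq, hqw, hcq⟩ := M.factor_cof_trivFib f
  have := H q hq hqw
  have sq : CommSq c f q (𝟙 B) := ⟨by rw [hcq, Category.comp_id]⟩
  exact M.cof_retract c f (𝟙 A) (𝟙 A) sq.lift q (Category.id_comp _) sq.fac_right
    (by rw [Category.id_comp, sq.fac_left]) (by rw [hcq, Category.id_comp]) hc

lemma weq_of_hasLiftingProperty {A B : C} (f : A ⟶ B)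
    (H : ∀ {X Y : C} (p : X ⟶ Y), M.fib p → HasLiftingProperty f p) :
    M.weq f := by
  obtain ⟨Z, c, q, -, hcw, hq, hcq⟩ := M.factor_trivCof_fib f
  have := H q hq
  have sq : CommSq c f q (𝟙 B) := ⟨by rw [hcq, Category.comp_id]⟩
  exact M.weq_retract c f (𝟙 A) (𝟙 A) sq.lift q (Category.id_comp _) sq.fac_right
    (by rw [Category.id_comp, sq.fac_left]) (by rw [hcq, Category.id_comp]) hcw

lemma weq_of_section_of_weq_comp {E B : C} {q : E ⟶ B} {g : B ⟶ E} (hgq : g ≫ q = 𝟙 B)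
    (h : M.weq (q ≫ g)) : M.weq q :=
  M.weq_retract (q ≫ g) q (𝟙 E) (𝟙 E) g q (Category.id_comp _) hgq (Category.id_comp _)
    (by rw [Category.assoc, hgq, Category.comp_id, Category.id_comp]) h

lemma cof_comp {A B D : C} {f : A ⟶ B} {g : B ⟶ D} (hf : M.cof f) (hg : M.cof g) :
    M.cof (f ≫ g) :=
  M.cof_of_hasLiftingProperty _ fun p hp hpw ↦
    have := M.lift_cof_trivFib f p hf hp hpw
    have := M.lift_cof_trivFib g p hg hp hpw
    inferInstance

lemma cof_coprod_inl {A B : C} (hB : M.Cofibrant B) : M.cof (coprod.inl : A ⟶ A ⨿ B) :=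
  M.cof_of_hasLiftingProperty _ fun p hp hpw ↦
    have := M.lift_cof_trivFib _ p hB hp hpw
    (IsPushout.of_hasBinaryCoproduct' A B).hasLiftingProperty p

lemma weq_pushout_inl {A B Z : C} (s : A ⟶ B) {j : A ⟶ Z} (hj : M.cof j) (hjw : M.weq j) :
    M.weq (pushout.inl s j) :=
  M.weq_of_hasLiftingProperty _ fun p hp ↦
    have := M.lift_trivCof_fib j p hj hjw hp
    inferInstance

variable {M}

lemma weq_inl_comp_of_cylinder {A Z : C} {ins : A ⨿ A ⟶ Z} {σ : Z ⟶ A} (hσ : M.weq σ)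
    (hfold : ins ≫ σ = coprod.desc (𝟙 A) (𝟙 A)) : M.weq (coprod.inl ≫ ins) :=
  M.weq_of_comp_left _ σ hσ (by rw [Category.assoc, hfold, coprod.inl_desc]; exact M.weq_id A)

lemma weq_inr_comp_of_cylinder {A Z : C} {ins : A ⨿ A ⟶ Z} {σ : Z ⟶ A} (hσ : M.weq σ)
    (hfold : ins ≫ σ = coprod.desc (𝟙 A) (𝟙 A)) : M.weq (coprod.inr ≫ ins) :=
  M.weq_of_comp_left _ σ hσ (by rw [Category.assoc, hfold, coprod.inr_desc]; exact M.weq_id A)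

lemma cof_mappingCylinder_inr {A B Z : C} (i : A ⟶ B) {ins : A ⨿ A ⟶ Z}
    (hB : M.Cofibrant B) (hins : M.cof ins) :
    M.cof (coprod.inr ≫ ins ≫ pushout.inr i (coprod.inl ≫ ins)) :=
  M.cof_of_hasLiftingProperty _ fun p hp hpw ↦
    have := M.lift_cof_trivFib _ p hB hp hpw
    have := M.lift_cof_trivFib ins p hins hp hpw
    hasLiftingProperty_mappingCylinder_inr i ins p

lemma weq_mappingCylinder_inr {A B Z : C} {i : A ⟶ B} {ins : A ⨿ A ⟶ Z} {σ : Z ⟶ A}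
    (hA : M.Cofibrant A) (hins : M.cof ins) (hσ : M.weq σ)
    (hfold : ins ≫ σ = coprod.desc (𝟙 A) (𝟙 A)) (hi : M.weq i) :
    M.weq (coprod.inr ≫ ins ≫ pushout.inr i (coprod.inl ≫ ins)) := by
  have hcond : i ≫ 𝟙 B = (coprod.inl ≫ ins) ≫ σ ≫ i := by
    rw [Category.comp_id, Category.assoc, reassoc_of% hfold, coprod.inl_desc_assoc,
      Category.id_comp]
  have hinl : M.weq (pushout.inl i (coprod.inl ≫ ins)) :=
    M.weq_pushout_inl i (M.cof_comp (M.cof_coprod_inl hA) hins)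
      (weq_inl_comp_of_cylinder hσ hfold)
  have hr : M.weq (pushout.desc (𝟙 B) (σ ≫ i) hcond) :=
    M.weq_of_comp_right _ _ hinl (by rw [pushout.inl_desc]; exact M.weq_id B)
  refine M.weq_of_comp_left _ _ hr ?_
  rwa [Category.assoc, Category.assoc, pushout.inr_desc, reassoc_of% hfold,
    coprod.inr_desc_assoc, Category.id_comp]

end QuillenModelStructure

open QuillenModelStructure in
/-- Dual statement: a map between cofibrant objects is a weak equivalence iff it has the
left homotopy extension lifting property with respect to all fibrations. -/
theorem weq_iff_left_HELP (M : QuillenModelStructure C) {A B : C}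
    (i : A ⟶ B) (hA : M.Cofibrant A) (hB : M.Cofibrant B) :
    M.weq i ↔
      ∀ (Z : C) (ins : A ⨿ A ⟶ Z) (σ : Z ⟶ A),
        M.cof ins → M.weq σ → ins ≫ σ = coprod.desc (𝟙 A) (𝟙 A) →
        ∀ {X Y : C} (p : X ⟶ Y), M.fib p →
          ∀ (f : A ⟶ X) (gY : B ⟶ Y) (hY : Z ⟶ Y),
            coprod.inl ≫ ins ≫ hY = i ≫ gY → coprod.inr ≫ ins ≫ hY = f ≫ p →
            ∃ (g : B ⟶ X) (h : Z ⟶ X),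
              g ≫ p = gY ∧ h ≫ p = hY ∧
                coprod.inl ≫ ins ≫ h = i ≫ g ∧ coprod.inr ≫ ins ≫ h = f := by
  constructor
  · intro hi Z ins σ hins hσ hfold X Y p hp f gY hY hY₀ hY₁
    have := M.lift_trivCof_fib _ p (M.cof_mappingCylinder_inr i hB hins)
      (weq_mappingCylinder_inr hA hins hσ hfold hi) hp
    have sq : CommSq f (coprod.inr ≫ ins ≫ pushout.inr i (coprod.inl ≫ ins)) p
        (pushout.desc gY hY (by rw [Category.assoc, hY₀])) :=
      ⟨by rw [Category.assoc, Category.assoc, pushout.inr_desc, hY₁]⟩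
    refine ⟨pushout.inl _ _ ≫ sq.lift, pushout.inr _ _ ≫ sq.lift, ?_, ?_, ?_, ?_⟩
    · rw [Category.assoc, sq.fac_right, pushout.inl_desc]
    · rw [Category.assoc, sq.fac_right, pushout.inr_desc]
    · simp only [pushout.condition_assoc, Category.assoc]
    · simpa only [Category.assoc] using sq.fac_left
  · intro H
    obtain ⟨E, c, q, -, hcw, hq, rfl⟩ := M.factor_trivCof_fib i
    obtain ⟨Z, ins, σ, hins, -, hσ, hfold⟩ := M.factor_cof_trivFib (coprod.desc (𝟙 A) (𝟙 A))
    obtain ⟨g, h, hgq, -, hh₀, hh₁⟩ := H Z ins σ hins hσ hfold q hq c (𝟙 B) (σ ≫ c ≫ q)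
      (by rw [reassoc_of% hfold, coprod.inl_desc_assoc, Category.id_comp, Category.comp_id])
      (by rw [reassoc_of% hfold, coprod.inr_desc_assoc, Category.id_comp])
    have hh : M.weq h := M.weq_of_comp_right _ h (weq_inr_comp_of_cylinder hσ hfold)
      (by rwa [Category.assoc, hh₁])
    have hcqg : M.weq (c ≫ q ≫ g) := by
      simpa only [Category.assoc, hh₀] using M.weq_comp _ h (weq_inl_comp_of_cylinder hσ hfold) hh
    exact M.weq_comp c q hcw
      (M.weq_of_section_of_weq_comp hgq (M.weq_of_comp_right c _ hcw hcqg))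
end
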